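/- Let X_a ~ DTS_α(q_{1/a}, a^{-α} η) where q_{1/a}(x) = q(ax). Then as a ↓ 0, the random variables a·X_a converge in distribution to PTS_α(q, η). -/

import Mathlib

/-!
By the pgf, the Laplace transform of `a X_a` at `z` is the pgf of `X_a` at `s = e^{-za}`; the
substitution `y = a x` in the Lévy integral turns it into
`exp (-η ∫₀^∞ (1 - e^{-c_a y}) q(y) y^{-1-α} dy)` with `c_a = (1 - e^{-za}) / a → z`, so by
dominated convergence the Laplace transforms of `a X_a` converge to that of `PTS_α(q, η)`.

For laws on `[0, ∞)` this implies convergence in distribution. A bounded continuous `f` is cut off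
beyond `1 / z`, at a cost bounded by a multiple of `1 - L(z)`, which is small uniformly once `z` is
small. The truncated function is `F (e^{-x})` for some `F` continuous on `[0, 1]`, hence uniformly
close to a polynomial in `e^{-x}`, whose integrals are combinations of Laplace transforms.
-/

open MeasureTheory Real Set Filter Topology
open scoped BoundedContinuousFunction

lemma one_sub_exp_neg_nonneg {t : ℝ} (ht : 0 ≤ t) : 0 ≤ 1 - exp (-t) := by
  simpa using exp_le_one_iff.mpr (neg_nonpos.mpr ht)

lemma one_sub_exp_neg_mul_le {c z y : ℝ} (hc : c ≤ z) (hy : 0 ≤ y) :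
    1 - exp (-(c * y)) ≤ max 1 z * min 1 y := by
  rcases le_total y 1 with hy1 | hy1
  · rw [min_eq_right hy1]
    calc 1 - exp (-(c * y)) ≤ c * y := by linarith [one_sub_le_exp_neg (c * y)]
      _ ≤ max 1 z * y := by gcongr; exact hc.trans (le_max_right 1 z)
  · rw [min_eq_left hy1, mul_one]
    linarith [exp_pos (-(c * y)), le_max_left 1 z]

lemma tendsto_of_forall_approx {ι : Type*} {l : Filter ι} {u : ι → ℝ} {a : ℝ}
    (h : ∀ δ > 0, ∃ (v w : ι → ℝ) (b c : ℝ), Tendsto v l (𝓝 b) ∧ Tendsto w l (𝓝 c) ∧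
      c ≤ δ ∧ |a - b| ≤ c ∧ ∀ᶠ i in l, |u i - v i| ≤ w i) :
    Tendsto u l (𝓝 a) := by
  refine Metric.tendsto_nhds.mpr fun ε hε => ?_
  obtain ⟨v, w, b, c, hv, hw, hcδ, hab, huv⟩ := h (ε / 4) (by positivity)
  filter_upwards [huv, Metric.tendsto_nhds.mp hv (ε / 4) (by positivity),
    hw.eventually_lt_const (show c < ε / 2 by linarith)] with i hi hvi hwi
  rw [Real.dist_eq] at hvi ⊢
  rw [abs_sub_comm] at hab
  linarith [abs_sub_le (u i) (v i) a, abs_sub_le (v i) b a]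

lemma abs_integral_sub_integral_le {X : Type*} [MeasurableSpace X] {μ : Measure X}
    {f g e : X → ℝ} (hf : Integrable f μ) (hg : Integrable g μ) (he : Integrable e μ)
    (hfg : ∀ᵐ x ∂μ, |f x - g x| ≤ e x) :
    |∫ x, f x ∂μ - ∫ x, g x ∂μ| ≤ ∫ x, e x ∂μ := by
  rw [← integral_sub hf hg]
  exact abs_integral_le_integral_abs.trans (integral_mono_ae (hf.sub hg).abs he hfg)

lemma exists_polynomial_eval_exp_neg_near {h : ℝ → ℝ} (hh : Continuous h) {R : ℝ}
    (hR : ∀ x, R ≤ x → h x = 0) {δ : ℝ} (hδ : 0 < δ) :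
    ∃ p : Polynomial ℝ, ∀ x, 0 ≤ x → |p.eval (exp (-x)) - h x| < δ := by
  set F : ℝ → ℝ := fun t => h (-log (max t (exp (-R))))
  have hF : Continuous F :=
    hh.comp ((continuous_id.max continuous_const).log fun t =>
      (lt_max_of_lt_right (exp_pos _)).ne').neg
  have hFh (x : ℝ) : F (exp (-x)) = h x := by
    rcases le_total x R with hxR | hxR
    · simp [F, max_eq_left (exp_le_exp.mpr (neg_le_neg hxR))]
    · simp [F, max_eq_right (exp_le_exp.mpr (neg_le_neg hxR)), hR x hxR, hR R le_rfl]
  obtain ⟨p, hp⟩ := exists_polynomial_near_of_continuousOn 0 1 F hF.continuousOn δ hδ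
  exact ⟨p, fun x hx => hFh x ▸ hp _ ⟨(exp_pos _).le, exp_le_one_iff.mpr (neg_nonpos.mpr hx)⟩⟩

noncomputable def cutoff (M : ℝ) : ℝ →ᵇ ℝ :=
  .ofNormedAddCommGroup (fun x => max 0 (min 1 (M + 1 - x))) (by fun_prop) 1 fun x => by
    rw [norm_of_nonneg (le_max_left _ _)]
    exact max_le zero_le_one (min_le_left _ _)

lemma cutoff_of_le {M x : ℝ} (hx : x ≤ M) : cutoff M x = 1 := by
  simp [cutoff, min_eq_left (by linarith : (1 : ℝ) ≤ M + 1 - x)]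

lemma cutoff_of_ge {M x : ℝ} (hx : M + 1 ≤ x) : cutoff M x = 0 := by
  simp [cutoff, hx]

lemma cutoff_mem_Icc (M x : ℝ) : cutoff M x ∈ Icc 0 1 := by
  simp [cutoff]

-- Below `z⁻¹` there is no error; beyond it the error is at most `‖f‖`,
-- and there `1 - e^{-zx} ≥ 1 - e^{-1}`.
lemma abs_sub_mul_cutoff_le (f : ℝ →ᵇ ℝ) {z x : ℝ} (hz : 0 < z) (hx : 0 ≤ x) :
    |f x - (f * cutoff z⁻¹) x| ≤ ‖f‖ * (1 - exp (-(z * x))) / (1 - exp (-1)) := by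
  have he : 0 < 1 - exp (-1) := by simp
  rw [le_div_iff₀ he, BoundedContinuousFunction.mul_apply, ← mul_one_sub, abs_mul]
  rcases le_or_gt x z⁻¹ with hxz | hxz
  · rw [cutoff_of_le hxz, sub_self, abs_zero, mul_zero, zero_mul]
    exact mul_nonneg (norm_nonneg f) (one_sub_exp_neg_nonneg (by positivity))
  · have hzx : 1 ≤ z * x := ((inv_lt_iff_one_lt_mul₀' hz).mp hxz).le
    have hψ : |1 - cutoff z⁻¹ x| ≤ 1 := by
      obtain ⟨h0, h1⟩ := cutoff_mem_Icc z⁻¹ x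
      rw [abs_le]; constructor <;> linarith
    calc |f x| * |1 - cutoff z⁻¹ x| * (1 - exp (-1)) ≤ ‖f‖ * 1 * (1 - exp (-1)) := by
          gcongr
          exact f.norm_coe_le_norm x
      _ ≤ ‖f‖ * (1 - exp (-(z * x))) := by
          rw [mul_one]
          gcongr

section NonnegSupport

variable {μ : Measure ℝ}

lemma integrable_of_continuous_of_abs_le [IsFiniteMeasure μ] (hμ : ∀ᵐ x ∂μ, 0 ≤ x)
    {g : ℝ → ℝ} (hg : Continuous g) {B : ℝ} (hB : ∀ x, 0 ≤ x → |g x| ≤ B) :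
    Integrable g μ :=
  (integrable_const B).mono' hg.aestronglyMeasurable
    (by filter_upwards [hμ] with x hx using hB x hx)

lemma integrable_exp_neg_mul [IsFiniteMeasure μ] (hμ : ∀ᵐ x ∂μ, 0 ≤ x) {z : ℝ} (hz : 0 ≤ z) :
    Integrable (fun x => exp (-(z * x))) μ :=
  integrable_of_continuous_of_abs_le hμ (by fun_prop) fun x hx => by
    rw [abs_of_pos (exp_pos _), exp_le_one_iff, neg_nonpos]; positivity

lemma integrable_eval_exp_neg [IsFiniteMeasure μ] (hμ : ∀ᵐ x ∂μ, 0 ≤ x) (p : Polynomial ℝ) :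
    Integrable (fun x => p.eval (exp (-x))) μ := by
  obtain ⟨B, hB⟩ := isCompact_Icc.exists_bound_of_continuousOn
    (p.continuous.continuousOn (s := Icc (0 : ℝ) 1))
  exact integrable_of_continuous_of_abs_le hμ (by fun_prop) fun x hx =>
    hB _ ⟨(exp_pos _).le, exp_le_one_iff.mpr (neg_nonpos.mpr hx)⟩

lemma integral_eval_exp_neg [IsFiniteMeasure μ] (hμ : ∀ᵐ x ∂μ, 0 ≤ x) (p : Polynomial ℝ) :
    ∫ x, p.eval (exp (-x)) ∂μ =
      ∑ n ∈ Finset.range (p.natDegree + 1), p.coeff n * ∫ x, exp (-(n * x)) ∂μ := by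
  have hterm (n : ℕ) (x : ℝ) : p.coeff n * exp (-x) ^ n = p.coeff n * exp (-(n * x)) := by
    rw [← exp_nat_mul, mul_neg]
  simp_rw [Polynomial.eval_eq_sum_range, hterm, ← integral_const_mul]
  exact integral_finsetSum _ fun n _ =>
    (integrable_exp_neg_mul hμ n.cast_nonneg).const_mul _

lemma tendsto_integral_exp_neg_mul_nhdsGT_zero [IsFiniteMeasure μ] (hμ : ∀ᵐ x ∂μ, 0 ≤ x) :
    Tendsto (fun z => ∫ x, exp (-(z * x)) ∂μ) (𝓝[>] 0) (𝓝 (μ.real univ)) := by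
  have hlim : ∫ x, exp (-((0 : ℝ) * x)) ∂μ = μ.real univ := by simp
  rw [← hlim]
  refine tendsto_integral_filter_of_dominated_convergence (fun _ => 1)
    (.of_forall fun z => by fun_prop) ?_ (integrable_const 1) (.of_forall fun x => ?_)
  · filter_upwards [self_mem_nhdsWithin] with z (hz : 0 < z)
    filter_upwards [hμ] with x hx
    rw [norm_of_nonneg (exp_pos _).le, exp_le_one_iff, neg_nonpos]
    positivity
  · exact ((by fun_prop : Continuous fun z => exp (-(z * x))).tendsto 0).mono_left
      nhdsWithin_le_nhds

lemma abs_integral_sub_integral_mul_cutoff_le [IsProbabilityMeasure μ] (hμ : ∀ᵐ x ∂μ, 0 ≤ x)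
    (f : ℝ →ᵇ ℝ) {z : ℝ} (hz : 0 < z) :
    |∫ x, f x ∂μ - ∫ x, (f * cutoff z⁻¹) x ∂μ| ≤
      ‖f‖ * (1 - ∫ x, exp (-(z * x)) ∂μ) / (1 - exp (-1)) := by
  have hexp := integrable_exp_neg_mul hμ hz.le
  have hbound : ∫ x, ‖f‖ * (1 - exp (-(z * x))) / (1 - exp (-1)) ∂μ =
      ‖f‖ * (1 - ∫ x, exp (-(z * x)) ∂μ) / (1 - exp (-1)) := by
    rw [integral_div, integral_const_mul, integral_sub (integrable_const 1) hexp,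
      integral_const, probReal_univ, one_smul]
  rw [← hbound]
  refine abs_integral_sub_integral_le (f.integrable μ) ((f * cutoff z⁻¹).integrable μ)
    ((((integrable_const 1).sub hexp).const_mul _).div_const _) ?_
  filter_upwards [hμ] with x hx using abs_sub_mul_cutoff_le f hz hx

lemma abs_integral_sub_integral_le_of_forall_nonneg [IsProbabilityMeasure μ]
    (hμ : ∀ᵐ x ∂μ, 0 ≤ x) {f g : ℝ → ℝ} (hf : Integrable f μ) (hg : Integrable g μ) {δ : ℝ}
    (hfg : ∀ x, 0 ≤ x → |f x - g x| ≤ δ) :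
    |∫ x, f x ∂μ - ∫ x, g x ∂μ| ≤ δ := by
  simpa using abs_integral_sub_integral_le hf hg (integrable_const δ)
    (by filter_upwards [hμ] with x hx using hfg x hx)

variable {ι : Type*} {l : Filter ι} {ρ : ι → Measure ℝ}

lemma tendsto_integral_eval_exp_neg
    (hρ : ∀ᶠ i in l, IsProbabilityMeasure (ρ i) ∧ ∀ᵐ x ∂ρ i, 0 ≤ x)
    [IsProbabilityMeasure μ] (hμ : ∀ᵐ x ∂μ, 0 ≤ x)
    (hL : ∀ n : ℕ, Tendsto (fun i => ∫ x, exp (-(n * x)) ∂ρ i) l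
      (𝓝 (∫ x, exp (-(n * x)) ∂μ)))
    (p : Polynomial ℝ) :
    Tendsto (fun i => ∫ x, p.eval (exp (-x)) ∂ρ i) l (𝓝 (∫ x, p.eval (exp (-x)) ∂μ)) := by
  rw [integral_eval_exp_neg hμ]
  refine (tendsto_finsetSum _ fun n _ => (hL n).const_mul _).congr' ?_
  filter_upwards [hρ] with i ⟨_, hρi⟩
  exact (integral_eval_exp_neg hρi p).symm

lemma tendsto_integral_of_eq_zero_of_le
    (hρ : ∀ᶠ i in l, IsProbabilityMeasure (ρ i) ∧ ∀ᵐ x ∂ρ i, 0 ≤ x)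
    [IsProbabilityMeasure μ] (hμ : ∀ᵐ x ∂μ, 0 ≤ x)
    (hL : ∀ n : ℕ, Tendsto (fun i => ∫ x, exp (-(n * x)) ∂ρ i) l
      (𝓝 (∫ x, exp (-(n * x)) ∂μ)))
    (h : ℝ →ᵇ ℝ) {R : ℝ} (hR : ∀ x, R ≤ x → h x = 0) :
    Tendsto (fun i => ∫ x, h x ∂ρ i) l (𝓝 (∫ x, h x ∂μ)) := by
  refine tendsto_of_forall_approx fun δ hδ => ?_
  obtain ⟨p, hp⟩ := exists_polynomial_eval_exp_neg_near h.continuous hR hδ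
  have hclose (ν : Measure ℝ) [IsProbabilityMeasure ν] (hν : ∀ᵐ x ∂ν, 0 ≤ x) :
      |∫ x, h x ∂ν - ∫ x, p.eval (exp (-x)) ∂ν| ≤ δ :=
    abs_integral_sub_integral_le_of_forall_nonneg hν (h.integrable ν)
      (integrable_eval_exp_neg hν p) fun x hx => by rw [abs_sub_comm]; exact (hp x hx).le
  refine ⟨_, fun _ => δ, _, δ, tendsto_integral_eval_exp_neg hρ hμ hL p, tendsto_const_nhds,
    le_rfl, hclose μ hμ, ?_⟩
  filter_upwards [hρ] with i ⟨_, hρi⟩ using hclose (ρ i) hρi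

theorem tendsto_integral_of_tendsto_integral_exp_neg_mul
    (hρ : ∀ᶠ i in l, IsProbabilityMeasure (ρ i) ∧ ∀ᵐ x ∂ρ i, 0 ≤ x)
    [IsProbabilityMeasure μ] (hμ : ∀ᵐ x ∂μ, 0 ≤ x)
    (hL : ∀ z, 0 ≤ z → Tendsto (fun i => ∫ x, exp (-(z * x)) ∂ρ i) l
      (𝓝 (∫ x, exp (-(z * x)) ∂μ)))
    (f : ℝ →ᵇ ℝ) :
    Tendsto (fun i => ∫ x, f x ∂ρ i) l (𝓝 (∫ x, f x ∂μ)) := by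
  refine tendsto_of_forall_approx fun δ hδ => ?_
  set err : ℝ → ℝ := fun L => ‖f‖ * (1 - L) / (1 - exp (-1))
  have herr : Tendsto (fun z => err (∫ x, exp (-(z * x)) ∂μ)) (𝓝[>] 0) (𝓝 0) := by
    have := ((tendsto_integral_exp_neg_mul_nhdsGT_zero hμ).const_sub 1).const_mul ‖f‖
      |>.div_const (1 - exp (-1))
    simpa [err] using this
  obtain ⟨z, hzδ, hz⟩ := ((herr.eventually_lt_const hδ).and self_mem_nhdsWithin).exists
  refine ⟨_, fun i => err (∫ x, exp (-(z * x)) ∂ρ i), _, _,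
    tendsto_integral_of_eq_zero_of_le hρ hμ (fun n => hL n n.cast_nonneg) (f * cutoff z⁻¹)
      (R := z⁻¹ + 1) fun x hx => by simp [cutoff_of_ge hx],
    ((hL z (le_of_lt hz)).const_sub 1).const_mul ‖f‖ |>.div_const _, hzδ.le,
    abs_integral_sub_integral_mul_cutoff_le hμ f hz, ?_⟩
  filter_upwards [hρ] with i ⟨_, hρi⟩ using abs_integral_sub_integral_mul_cutoff_le hρi f hz

end NonnegSupport

noncomputable def laplaceExponent (k : ℝ → ℝ) (z : ℝ) : ℝ :=
  ∫ x in Ioi 0, (1 - exp (-(z * x))) * k x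

lemma continuousOn_laplaceExponent {k : ℝ → ℝ}
    (hk : AEStronglyMeasurable k (volume.restrict (Ioi 0)))
    (hk_int : IntegrableOn (fun x => min 1 x * k x) (Ioi 0)) :
    ContinuousOn (laplaceExponent k) (Ici 0) := by
  intro z₀ _
  refine tendsto_integral_filter_of_dominated_convergence
    (fun x => max 1 (z₀ + 1) * ‖min 1 x * k x‖) (.of_forall fun z => ?_) ?_
    (hk_int.norm.const_mul _) (.of_forall fun x => ?_)
  · exact (by fun_prop : Continuous fun x => 1 - exp (-(z * x))).aestronglyMeasurable.mul hk
  · filter_upwards [self_mem_nhdsWithin, eventually_nhdsWithin_of_eventually_nhds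
      (eventually_lt_nhds (lt_add_one z₀))] with z (hz : 0 ≤ z) hz₁
    filter_upwards [ae_restrict_mem measurableSet_Ioi] with x (hx : 0 < x)
    rw [norm_mul, norm_mul, norm_of_nonneg (one_sub_exp_neg_nonneg (by positivity)),
      norm_of_nonneg (le_min zero_le_one hx.le), ← mul_assoc]
    gcongr
    exact one_sub_exp_neg_mul_le hz₁.le hx.le
  · exact ((continuous_const.sub (by fun_prop)).tendsto z₀).mono_left nhdsWithin_le_nhds
      |>.mul_const _

lemma laplaceExponent_comp_mul_mul_rpow (k : ℝ → ℝ) {a : ℝ} (ha : 0 < a) (r z : ℝ) :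
    laplaceExponent (fun x => k (a * x) * x ^ r) z =
      a ^ (-1 - r) * laplaceExponent (fun y => k y * y ^ r) (z / a) := by
  have hscale : ∀ x ∈ Ioi (0 : ℝ), (1 - exp (-(z * x))) * (k (a * x) * x ^ r) =
      a ^ (-r) * ((1 - exp (-(z / a * (a * x)))) * (k (a * x) * (a * x) ^ r)) := by
    intro x hx
    have hzx : z / a * (a * x) = z * x := by field_simp
    have har : a ^ (-r) * a ^ r = 1 := by rw [← rpow_add ha, neg_add_cancel, rpow_zero]
    rw [mul_rpow ha.le (le_of_lt hx), hzx]
    linear_combination (-(1 - exp (-(z * x))) * (k (a * x) * x ^ r)) * har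
  unfold laplaceExponent
  rw [setIntegral_congr_fun measurableSet_Ioi hscale, integral_const_mul,
    integral_comp_mul_left_Ioi (fun y => (1 - exp (-(z / a * y))) * (k y * y ^ r)) 0 ha,
    mul_zero, smul_eq_mul, ← mul_assoc, ← rpow_neg_one, ← rpow_add ha]
  ring_nf

lemma integral_pow_eq_tsum (ν : Measure ℕ) [IsFiniteMeasure ν] {s : ℝ} (hs : |s| ≤ 1) :
    ∫ n, s ^ n ∂ν = ∑' n, s ^ n * (ν {n}).toReal := by
  have hint : Integrable (fun n : ℕ => s ^ n) ν :=
    (integrable_const 1).mono' (by fun_prop) (.of_forall fun n => by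
      simpa [abs_pow] using pow_le_one₀ (abs_nonneg s) hs)
  simp_rw [integral_countable hint, measureReal_def, smul_eq_mul, mul_comm]

lemma tendsto_one_sub_exp_neg_mul_div (z : ℝ) :
    Tendsto (fun a => (1 - exp (-(z * a))) / a) (𝓝[>] 0) (𝓝 z) := by
  have hd : HasDerivAt (fun t => 1 - exp (-(z * t))) z 0 := by
    simpa using (((hasDerivAt_id' (0 : ℝ)).const_mul z).neg.exp).const_sub 1
  simpa [div_eq_inv_mul] using hd.tendsto_slope_zero_right

lemma tendsto_integral_exp_neg_mul_map_mul {α η : ℝ} {q : ℝ → ℝ}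
    (hq : AEStronglyMeasurable (fun x => q x * x ^ (-1 - α)) (volume.restrict (Ioi 0)))
    (hq_int : IntegrableOn (fun x => min 1 x * (q x * x ^ (-1 - α))) (Ioi 0))
    {ν : ℝ → Measure ℕ} (hν : ∀ a, 0 < a → IsProbabilityMeasure (ν a))
    (hpgf : ∀ a, 0 < a → ∀ s ∈ Ioc (0 : ℝ) 1, ∑' n, s ^ n * (ν a {n}).toReal =
      exp (-(a ^ (-α) * η * laplaceExponent (fun x => q (a * x) * x ^ (-1 - α)) (1 - s))))
    {z : ℝ} (hz : 0 ≤ z) :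
    Tendsto (fun a => ∫ x, exp (-(z * x)) ∂(ν a).map (fun n : ℕ => a * n)) (𝓝[>] 0)
      (𝓝 (exp (-(η * laplaceExponent (fun x => q x * x ^ (-1 - α)) z)))) := by
  have hc : Tendsto (fun a => (1 - exp (-(z * a))) / a) (𝓝[>] 0) (𝓝[Ici 0] z) := by
    refine tendsto_nhdsWithin_iff.mpr ⟨tendsto_one_sub_exp_neg_mul_div z, ?_⟩
    filter_upwards [self_mem_nhdsWithin] with a (ha : 0 < a)
    exact div_nonneg (one_sub_exp_neg_nonneg (by positivity)) ha.le
  refine ((((continuousOn_laplaceExponent hq hq_int) z hz).tendsto.comp hc).const_mul η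
    |>.neg.rexp).congr' ?_
  filter_upwards [self_mem_nhdsWithin] with a (ha : 0 < a)
  have := hν a ha
  have hs : exp (-(z * a)) ∈ Ioc 0 1 :=
    ⟨exp_pos _, exp_le_one_iff.mpr (neg_nonpos.mpr (by positivity))⟩
  have hpow : a ^ (-α) * a ^ (-1 - (-1 - α)) = 1 := by
    rw [← rpow_add ha]; ring_nf; exact rpow_zero a
  calc exp (-(η * laplaceExponent (fun x => q x * x ^ (-1 - α)) ((1 - exp (-(z * a))) / a)))
      = exp (-(a ^ (-α) * η * laplaceExponent (fun x => q (a * x) * x ^ (-1 - α))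
          (1 - exp (-(z * a))))) := by
        rw [laplaceExponent_comp_mul_mul_rpow q ha, mul_comm (a ^ (-α)), mul_assoc η,
          ← mul_assoc (a ^ (-α)), hpow, one_mul]
    _ = ∑' n, exp (-(z * a)) ^ n * (ν a {n}).toReal := (hpgf a ha _ hs).symm
    _ = ∫ n, exp (-(z * a)) ^ n ∂ν a :=
        (integral_pow_eq_tsum _ (by rw [abs_of_pos hs.1]; exact hs.2)).symm
    _ = ∫ x, exp (-(z * x)) ∂(ν a).map (fun n : ℕ => a * n) := by
        rw [integral_map (by fun_prop) (by fun_prop)]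
        congr 1 with n
        rw [← exp_nat_mul]
        ring_nf

theorem stmt6_general (α η : ℝ)
    (q : ℝ → ℝ) (hqmeas : Measurable q)
    (hqint : IntegrableOn (fun x => min 1 x * q x * x ^ (-1 - α : ℝ)) (Set.Ioi 0))
    -- the laws of the random variables X_a ~ DTS_α(q_{1/a}, a^{-α} η),
    -- characterized by their probability generating functions
    (ν : ℝ → Measure ℕ) (hνprob : ∀ a : ℝ, 0 < a → IsProbabilityMeasure (ν a))
    (hpgf : ∀ a : ℝ, 0 < a → ∀ s ∈ Set.Ioc (0:ℝ) 1,
      (∑' n : ℕ, s ^ n * ((ν a) {n}).toReal) =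
        Real.exp (-(a ^ (-α : ℝ) * η * ∫ x in Set.Ioi (0:ℝ),
          (1 - Real.exp (-((1 - s) * x))) * q (a * x) * x ^ (-1 - α : ℝ))))
    -- the law μ = PTS_α(q, η), characterized by its Laplace transform
    (μ : Measure ℝ) [IsProbabilityMeasure μ] (hsupp : μ (Set.Iio 0) = 0)
    (hLT : ∀ z : ℝ, 0 ≤ z →
      ∫ x, Real.exp (-(z * x)) ∂μ =
        Real.exp (-(η * ∫ x in Set.Ioi (0:ℝ),
          (1 - Real.exp (-(z * x))) * q x * x ^ (-1 - α : ℝ)))) :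
    -- conclusion: a · X_a converges in distribution to PTS_α(q, η) as a ↓ 0
    ∀ f : BoundedContinuousFunction ℝ ℝ,
      Filter.Tendsto (fun a : ℝ => ∫ n : ℕ, f (a * n) ∂(ν a))
        (nhdsWithin 0 (Set.Ioi 0)) (nhds (∫ x, f x ∂μ)) := by
  intro f
  have hq : AEStronglyMeasurable (fun x => q x * x ^ (-1 - α)) (volume.restrict (Ioi 0)) :=
    (hqmeas.mul (measurable_id.pow_const _)).aestronglyMeasurable
  have hq_int : IntegrableOn (fun x => min 1 x * (q x * x ^ (-1 - α))) (Ioi 0) := by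
    simpa only [mul_assoc] using hqint
  have hμ : ∀ᵐ x ∂μ, 0 ≤ x := ae_iff.mpr (by simp only [not_le]; exact hsupp)
  have hL (z : ℝ) (hz : 0 ≤ z) :
      Tendsto (fun a => ∫ x, exp (-(z * x)) ∂(ν a).map (fun n : ℕ => a * n)) (𝓝[>] 0)
        (𝓝 (∫ x, exp (-(z * x)) ∂μ)) := by
    rw [hLT z hz]
    simpa only [laplaceExponent, mul_assoc] using tendsto_integral_exp_neg_mul_map_mul hq hq_int
      hνprob (by simpa only [laplaceExponent, mul_assoc] using hpgf) hz
  have hρ : ∀ᶠ a in 𝓝[>] 0, IsProbabilityMeasure ((ν a).map (fun n : ℕ => a * n)) ∧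
      ∀ᵐ x ∂(ν a).map (fun n : ℕ => a * n), 0 ≤ x := by
    filter_upwards [self_mem_nhdsWithin] with a (ha : 0 < a)
    have := hνprob a ha
    exact ⟨Measure.isProbabilityMeasure_map (by fun_prop),
      (ae_map_iff (by fun_prop) measurableSet_Ici).mpr (.of_forall fun n => by positivity)⟩
  refine (tendsto_integral_of_tendsto_integral_exp_neg_mul hρ hμ hL f).congr fun a => ?_
  exact integral_map (by fun_prop) (by fun_prop)

theorem stmt6 (α η : ℝ) (hα : α ∈ Set.Ioo (0:ℝ) 1) (hη : 0 ≤ η)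
    (q : ℝ → ℝ) (hqmeas : Measurable q) (hqnonneg : ∀ x, 0 ≤ q x)
    (C : ℝ) (hqbdd : ∀ x, q x ≤ C)
    (hq1 : Filter.Tendsto q (nhdsWithin 0 (Set.Ioi 0)) (nhds 1))
    (hqint : IntegrableOn (fun x => min 1 x * q x * x ^ (-1 - α : ℝ)) (Set.Ioi 0))
    -- the laws of the random variables X_a ~ DTS_α(q_{1/a}, a^{-α} η),
    -- characterized by their probability generating functions
    (ν : ℝ → Measure ℕ) (hνprob : ∀ a : ℝ, 0 < a → IsProbabilityMeasure (ν a))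
    (hpgf : ∀ a : ℝ, 0 < a → ∀ s ∈ Set.Ioc (0:ℝ) 1,
      (∑' n : ℕ, s ^ n * ((ν a) {n}).toReal) =
        Real.exp (-(a ^ (-α : ℝ) * η * ∫ x in Set.Ioi (0:ℝ),
          (1 - Real.exp (-((1 - s) * x))) * q (a * x) * x ^ (-1 - α : ℝ))))
    -- the law μ = PTS_α(q, η), characterized by its Laplace transform
    (μ : Measure ℝ) [IsProbabilityMeasure μ] (hsupp : μ (Set.Iio 0) = 0)
    (hLT : ∀ z : ℝ, 0 ≤ z →
      ∫ x, Real.exp (-(z * x)) ∂μ =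
        Real.exp (-(η * ∫ x in Set.Ioi (0:ℝ),
          (1 - Real.exp (-(z * x))) * q x * x ^ (-1 - α : ℝ)))) :
    -- conclusion: a · X_a converges in distribution to PTS_α(q, η) as a ↓ 0
    ∀ f : BoundedContinuousFunction ℝ ℝ,
      Filter.Tendsto (fun a : ℝ => ∫ n : ℕ, f (a * n) ∂(ν a))
        (nhdsWithin 0 (Set.Ioi 0)) (nhds (∫ x, f x ∂μ)) :=
  stmt6_general α η q hqmeas hqint ν hνprob hpgf μ hsupp hLT
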